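/- arXiv:1407.4993 — 3 statements merged into one kernel-verified Lean document; each statement's English description precedes it below -/
import Mathlib

section
/- Let d ≥ 2, n ≥ d, and let ℓ ∈ ℝⁿ be an ordered generic length vector. Then ℓ is d-regular if and only if S_{n−d}(ℓ) = ∅, i.e. there is no ℓ-short subset of cardinality n−d+1 containing n. -/
noncomputable section

/-- `ℝ^d` with the Euclidean norm. -/
abbrev Euc (d : ℕ) := EuclideanSpace ℝ (Fin d)

/-- A subset `J` is `ℓ`-short if the sum of its entries is less than the sum over the complement. -/
def Short {n : ℕ} (ℓ : Fin n → ℝ) (J : Finset (Fin n)) : Prop :=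
  ∑ j ∈ J, ℓ j < ∑ j ∈ Jᶜ, ℓ j

/-- A subset is `ℓ`-long if its complement is `ℓ`-short. -/
def Long {n : ℕ} (ℓ : Fin n → ℝ) (J : Finset (Fin n)) : Prop := Short ℓ Jᶜ

/-- `ℓ` is generic if every subset is `ℓ`-short or `ℓ`-long. -/
def Generic {n : ℕ} (ℓ : Fin n → ℝ) : Prop := ∀ J : Finset (Fin n), Short ℓ J ∨ Long ℓ J

/-- `ℓ` is `d`-regular if the intersection of all `ℓ`-long subsets of cardinality `d-1`
is nonempty (with the convention that the empty intersection is everything). -/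
def DRegular (d : ℕ) {n : ℕ} (ℓ : Fin n → ℝ) : Prop :=
  ∃ i : Fin n, ∀ J : Finset (Fin n), J.card = d - 1 → Long ℓ J → i ∈ J

/-- `S_k(ℓ)`: the `ℓ`-short subsets of cardinality `k+1` containing the last index. -/
def Sk (n : ℕ) (hn : 0 < n) (k : ℕ) (ℓ : Fin n → ℝ) : Set (Finset (Fin n)) :=
  {J | (⟨n - 1, Nat.sub_lt hn one_pos⟩ : Fin n) ∈ J ∧ J.card = k + 1 ∧ Short ℓ J}

/-!
Complementation identifies `S_{n-d}(ℓ)` with the long `(d-1)`-sets that avoid the last index `n`.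
Since `ℓ_n` is a largest entry, swapping `n` into a long set for any member keeps it long; hence
if some index lies in every long `(d-1)`-set, so does `n`, and `d`-regularity means exactly that
no long `(d-1)`-set avoids `n`.
-/

section LengthVector

variable {n : ℕ} {ℓ : Fin n → ℝ}

theorem long_compl_iff_short {J : Finset (Fin n)} : Long ℓ Jᶜ ↔ Short ℓ J := by
  rw [Long, compl_compl]

theorem long_iff_lt_two_mul_sum {J : Finset (Fin n)} :
    Long ℓ J ↔ ∑ j, ℓ j < 2 * ∑ j ∈ J, ℓ j := by
  rw [Long, Short, compl_compl, ← Finset.sum_add_sum_compl J ℓ]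
  constructor <;> intro h <;> linarith

theorem Long.swap {J : Finset (Fin n)} (hJ : Long ℓ J) {i j : Fin n} (hi : i ∈ J) (hj : j ∉ J)
    (hij : ℓ i ≤ ℓ j) : Long ℓ (insert j (J.erase i)) := by
  rw [long_iff_lt_two_mul_sum] at hJ ⊢
  rw [Finset.sum_insert fun h => hj (Finset.mem_of_mem_erase h), Finset.sum_erase_eq_sub hi]
  linarith

theorem dRegular_iff_forall_mem_of_le {d : ℕ} {m : Fin n} (hm : ∀ i, ℓ i ≤ ℓ m) :
    DRegular d ℓ ↔ ∀ J : Finset (Fin n), J.card = d - 1 → Long ℓ J → m ∈ J := by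
  refine ⟨fun ⟨i, hi⟩ J hcard hJ => ?_, fun h => ⟨m, h⟩⟩
  by_contra hmJ
  have hiJ : i ∈ J := hi J hcard hJ
  have hcard' : (insert m (J.erase i)).card = d - 1 := by
    rw [Finset.card_insert_of_notMem fun h => hmJ (Finset.mem_of_mem_erase h),
      Finset.card_erase_add_one hiJ, hcard]
  have hiK := hi _ hcard' (hJ.swap hiJ hmJ (hm i))
  rcases Finset.mem_insert.mp hiK with rfl | hiK
  · exact hmJ hiJ
  · exact Finset.notMem_erase i J hiK

theorem sk_eq_empty_iff (hn : 0 < n) {k : ℕ} (hk : k < n) :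
    Sk n hn k ℓ = ∅ ↔ ∀ J : Finset (Fin n), J.card = n - (k + 1) → Long ℓ J →
      (⟨n - 1, Nat.sub_lt hn one_pos⟩ : Fin n) ∈ J := by
  rw [Set.eq_empty_iff_forall_notMem]
  refine ⟨fun h J hcard hJ => ?_, fun h J ⟨hmem, hcard, hJ⟩ => ?_⟩
  · by_contra hnot
    refine h Jᶜ ⟨Finset.mem_compl.mpr hnot, ?_, hJ⟩
    rw [Finset.card_compl, Fintype.card_fin, hcard]
    omega
  · refine Finset.mem_compl.mp (h Jᶜ ?_ (long_compl_iff_short.mpr hJ)) hmem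
    rw [Finset.card_compl, Fintype.card_fin, hcard]

end LengthVector

/-- For `d ≥ 2`, `n ≥ d` and an ordered generic length vector `ℓ ∈ ℝⁿ`,
`ℓ` is `d`-regular iff `S_{n-d}(ℓ) = ∅`, i.e. there is no `ℓ`-short subset of cardinality
`n-d+1` containing the last index. -/
theorem stmt5 (d n : ℕ) (hd : 2 ≤ d) (hn : d ≤ n) (ℓ : Fin n → ℝ)
    (hord : Monotone ℓ) :
    DRegular d ℓ ↔ Sk n (by omega) (n - d) ℓ = ∅ := by
  have hlast : ∀ i : Fin n, ℓ i ≤ ℓ ⟨n - 1, by omega⟩ := fun i =>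
    hord (Fin.le_def.mpr (by simp only; omega))
  rw [dRegular_iff_forall_mem_of_le hlast, sk_eq_empty_iff _ (by omega),
    show n - (n - d + 1) = d - 1 by omega]
end
end

section
/- Let n ≥ 3 and let ℓ ∈ ℝⁿ be an ordered generic length vector that is not 3-regular, i.e. such that {n−2, n−1} is ℓ-long. Then a subset J ⊆ {1,…,n} is ℓ-short if and only if |J ∩ {n−2, n−1, n}| ≤ 1. In particular, any two ordered generic non-3-regular length vectors in ℝⁿ have exactly the same ℓ-short subsets, so there is only one chamber of non-3-regular generic length vectors up to permutation. -/
noncomputable section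

/-!
If `{n-2, n-1}` is long, then so is every set containing two of the three largest indices,
because for ordered `ℓ` any two of them have total length at least `ℓ_{n-2} + ℓ_{n-1}`.
A set with at most one of them has a complement with at least two, so it is short; a set with
two or more is long, hence not short.
-/

open Finset

variable {n : ℕ} {ℓ : Fin n → ℝ}

theorem short_iff_long_compl {J : Finset (Fin n)} : Short ℓ J ↔ Long ℓ Jᶜ := by
  rw [Long, compl_compl]

theorem long_iff_sum_compl_lt {J : Finset (Fin n)} :
    Long ℓ J ↔ ∑ j ∈ Jᶜ, ℓ j < ∑ j ∈ J, ℓ j := by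
  rw [Long, Short, compl_compl]

theorem Long.not_short {J : Finset (Fin n)} (h : Long ℓ J) : ¬ Short ℓ J :=
  (long_iff_sum_compl_lt.mp h).asymm

theorem Long.of_sum_le {J K : Finset (Fin n)} (hJ : Long ℓ J)
    (h : ∑ j ∈ J, ℓ j ≤ ∑ k ∈ K, ℓ k) : Long ℓ K := by
  rw [long_iff_sum_compl_lt] at hJ ⊢
  have hJ' := sum_compl_add_sum J ℓ
  have hK' := sum_compl_add_sum K ℓ
  linarith

theorem long_of_two_le_card_inter_Ici (hnonneg : ∀ i, 0 ≤ ℓ i) (hord : Monotone ℓ)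
    {a b : Fin n} (hab : (b : ℕ) = a + 1) (hlong : Long ℓ {a, b})
    {S : Finset (Fin n)} (hS : 2 ≤ #(S ∩ Ici a)) : Long ℓ S := by
  have of_lt : ∀ x ∈ S ∩ Ici a, ∀ y ∈ S ∩ Ici a, x < y → Long ℓ S := by
    intro x hx y hy hxy
    simp only [mem_inter, mem_Ici] at hx hy
    have hby : b ≤ y := by
      rw [Fin.le_def, hab]
      exact hx.2.trans_lt hxy
    refine hlong.of_sum_le ?_
    calc ∑ j ∈ {a, b}, ℓ j = ℓ a + ℓ b := sum_pair (by rintro rfl; omega)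
      _ ≤ ℓ x + ℓ y := add_le_add (hord hx.2) (hord hby)
      _ = ∑ j ∈ {x, y}, ℓ j := (sum_pair hxy.ne).symm
      _ ≤ ∑ j ∈ S, ℓ j := sum_le_sum_of_subset_of_nonneg
          (insert_subset hx.1 (singleton_subset_iff.mpr hy.1)) fun i _ _ => hnonneg i
  obtain ⟨x, hx, y, hy, hne⟩ := one_lt_card.mp hS
  rcases hne.lt_or_gt with hxy | hyx
  · exact of_lt x hx y hy hxy
  · exact of_lt y hy x hx hyx

theorem short_iff_card_inter_Ici_le_one (hnonneg : ∀ i, 0 ≤ ℓ i) (hord : Monotone ℓ)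
    {a b : Fin n} (ha : (a : ℕ) + 3 = n) (hab : (b : ℕ) = a + 1) (hlong : Long ℓ {a, b})
    (J : Finset (Fin n)) : Short ℓ J ↔ #(J ∩ Ici a) ≤ 1 := by
  have hsplit : #(J ∩ Ici a) + #(Jᶜ ∩ Ici a) = 3 := by
    rw [inter_comm, inter_comm Jᶜ, ← sdiff_eq_inter_compl, card_inter_add_card_sdiff,
      Fin.card_Ici]
    omega
  constructor
  · intro hJ
    by_contra! h
    exact (long_of_two_le_card_inter_Ici hnonneg hord hab hlong h).not_short hJ
  · intro h
    exact short_iff_long_compl.mpr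
      (long_of_two_le_card_inter_Ici hnonneg hord hab hlong (by omega))

/-- Let `n ≥ 3` and let `ℓ ∈ ℝⁿ` be an ordered generic length vector which is
not `3`-regular, i.e. the set of the second and third largest indices `{n-2, n-1}` is `ℓ`-long.
Then a subset `J` is `ℓ`-short iff it contains at most one of the three largest indices
`{n-2, n-1, n}`. -/
theorem stmt7 (n : ℕ) (hn : 3 ≤ n) (ℓ : Fin n → ℝ)
    (hpos : ∀ i, 0 < ℓ i) (hord : Monotone ℓ)
    (hnotreg : Long ℓ ({⟨n - 3, by omega⟩, ⟨n - 2, by omega⟩} : Finset (Fin n))) :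
    ∀ J : Finset (Fin n),
      Short ℓ J ↔ (J ∩ Finset.univ.filter fun i : Fin n => n - 3 ≤ (i : ℕ)).card ≤ 1 := by
  have htop : (univ.filter fun i : Fin n => n - 3 ≤ (i : ℕ)) = Ici ⟨n - 3, by omega⟩ := by
    ext i
    simp [Fin.le_def]
  intro J
  rw [htop]
  exact short_iff_card_inter_Ici_le_one (fun i => (hpos i).le) hord (by simp only; omega)
    (by simp only; omega) hnotreg J
end
end

section
/- Let d ≥ 2, n ≥ d, and let ℓ ∈ ℝⁿ be an ordered, generic, d-regular length vector. Then for every subset J ⊆ {1,…,n−1} with |J| ≥ n−d, the set {x ∈ (S^{d−1})ⁿ : Σ_{i=1}^n ℓ_i x_i = 0 and x_j = x_n for all j ∈ J} is empty; equivalently, the moduli space M_d(ℓ_J) of the contracted length vector ℓ_J ∈ ℝ^{n−|J|} (obtained from ℓ by deleting the entries ℓ_j for j ∈ J and replacing ℓ_n by ℓ_n + Σ_{j∈J} ℓ_j) is empty. -/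
/-!
If `x` is such a configuration, the set `S = J ∪ {n}` carries one unit vector, so the closing
condition and the triangle inequality give `∑_{S} ℓ ≤ ∑_{Sᶜ} ℓ`; by genericity `Sᶜ` is long,
and `|Sᶜ| ≤ d - 1`. On the other hand, for an ordered `d`-regular `ℓ` every long set of at most
`d - 1` indices contains `n`: enlarge it to exactly `d - 1` indices avoiding `n`, and if the
regularity index `i` lies in it, exchanging `i` for `n` keeps it long (since `ℓ_i ≤ ℓ_n`) while
dropping `i`, contradicting regularity.
-/

noncomputable section

open Finset

theorem sum_le_sum_compl_of_sum_smul_eq_zero {ι E : Type*} [Fintype ι] [DecidableEq ι]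
    [SeminormedAddCommGroup E] [NormedSpace ℝ E] {ℓ : ι → ℝ} (hℓ : ∀ i, 0 ≤ ℓ i) {x : ι → E}
    (hx : ∀ i, ‖x i‖ ≤ 1) (h0 : ∑ i, ℓ i • x i = 0) {S : Finset ι} {v : E} (hv : ‖v‖ = 1)
    (hS : ∀ j ∈ S, x j = v) : ∑ j ∈ S, ℓ j ≤ ∑ j ∈ Sᶜ, ℓ j := by
  have hSv : ∑ j ∈ S, ℓ j • x j = (∑ j ∈ S, ℓ j) • v := by
    rw [sum_smul]
    exact sum_congr rfl fun j hj => by rw [hS j hj]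
  have hneg : ∑ j ∈ S, ℓ j • x j = -∑ j ∈ Sᶜ, ℓ j • x j :=
    eq_neg_of_add_eq_zero_left ((sum_add_sum_compl S _).trans h0)
  calc ∑ j ∈ S, ℓ j = ‖(∑ j ∈ S, ℓ j) • v‖ := by
        rw [norm_smul, hv, mul_one, Real.norm_of_nonneg (sum_nonneg fun j _ => hℓ j)]
    _ = ‖∑ j ∈ Sᶜ, ℓ j • x j‖ := by rw [← hSv, hneg, norm_neg]
    _ ≤ ∑ j ∈ Sᶜ, ‖ℓ j • x j‖ := norm_sum_le _ _
    _ ≤ ∑ j ∈ Sᶜ, ℓ j := sum_le_sum fun j _ => by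
        rw [norm_smul, Real.norm_of_nonneg (hℓ j)]
        exact mul_le_of_le_one_right (hℓ j) (hx j)

section LengthVector

variable {n : ℕ} {ℓ : Fin n → ℝ}

theorem long_iff_sum_lt_two_mul {T : Finset (Fin n)} :
    Long ℓ T ↔ ∑ i, ℓ i < 2 * ∑ j ∈ T, ℓ j := by
  rw [Long, Short, compl_compl, ← sum_add_sum_compl T ℓ]
  constructor <;> intro h <;> linarith

theorem Short.long_compl {S : Finset (Fin n)} (h : Short ℓ S) : Long ℓ Sᶜ := by
  rwa [Long, compl_compl]

theorem Long.mono (hℓ : ∀ i, 0 ≤ ℓ i) {U T : Finset (Fin n)} (hU : Long ℓ U) (hUT : U ⊆ T) :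
    Long ℓ T := by
  rw [long_iff_sum_lt_two_mul] at hU ⊢
  linarith [sum_le_sum_of_subset_of_nonneg hUT fun i _ _ => hℓ i]

theorem Long.insert_erase {T : Finset (Fin n)} (hT : Long ℓ T) {i m : Fin n} (hi : i ∈ T)
    (hm : m ∉ T) (hle : ℓ i ≤ ℓ m) : Long ℓ (insert m (T.erase i)) := by
  rw [long_iff_sum_lt_two_mul] at hT ⊢
  rw [sum_insert fun h => hm (mem_of_mem_erase h)]
  linarith [add_sum_erase T ℓ hi]

theorem DRegular.mem_of_long_of_card_eq {d : ℕ} (hreg : DRegular d ℓ) {m : Fin n}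
    (hm : ∀ i, ℓ i ≤ ℓ m) {T : Finset (Fin n)} (hT : Long ℓ T) (hcard : T.card = d - 1) :
    m ∈ T := by
  by_contra hmT
  obtain ⟨i, hi⟩ := hreg
  have hiT : i ∈ T := hi T hcard hT
  have hmTi : m ∉ T.erase i := fun h => hmT (mem_of_mem_erase h)
  have hcard' : (insert m (T.erase i)).card = d - 1 := by
    rw [card_insert_of_notMem hmTi, card_erase_of_mem hiT]
    have := card_pos.2 ⟨i, hiT⟩
    omega
  rcases mem_insert.1 (hi _ hcard' (hT.insert_erase hiT hmT (hm i))) with h | h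
  · exact hmT (h ▸ hiT)
  · exact notMem_erase i T h

theorem DRegular.mem_of_long_of_card_le {d : ℕ} (hreg : DRegular d ℓ) (hdn : d ≤ n)
    (hℓ : ∀ i, 0 ≤ ℓ i) {m : Fin n} (hm : ∀ i, ℓ i ≤ ℓ m) {T : Finset (Fin n)}
    (hT : Long ℓ T) (hcard : T.card ≤ d - 1) : m ∈ T := by
  by_contra hmT
  have hsub : T ⊆ univ.erase m := fun j hj =>
    mem_erase.2 ⟨fun h => hmT (h ▸ hj), mem_univ j⟩
  have hcard_erase : (univ.erase m).card = n - 1 := by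
    rw [card_erase_of_mem (mem_univ m), card_univ, Fintype.card_fin]
  obtain ⟨U, hTU, hUsub, hUcard⟩ :=
    exists_subsuperset_card_eq hsub hcard (by omega)
  exact (mem_erase.1 (hUsub (hreg.mem_of_long_of_card_eq hm (hT.mono hℓ hTU) hUcard))).1 rfl

end LengthVector

/-- Let `d ≥ 2`, `n ≥ d`, and let `ℓ ∈ ℝⁿ` be an ordered generic `d`-regular
length vector. Then for every subset `J` of the first `n-1` indices with `|J| ≥ n-d`, there is
no configuration of unit vectors `x ∈ (S^{d-1})ⁿ` with `∑ ℓᵢ xᵢ = 0` and `x_j = x_n` for all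
`j ∈ J` (equivalently, the moduli space of the contracted length vector `ℓ_J` is empty). -/
theorem stmt10 (d n : ℕ) (hd : 2 ≤ d) (hn : d ≤ n) (ℓ : Fin n → ℝ)
    (hpos : ∀ i, 0 < ℓ i) (hord : Monotone ℓ) (hgen : Generic ℓ) (hreg : DRegular d ℓ)
    (J : Finset (Fin n)) (hJ : (⟨n - 1, by omega⟩ : Fin n) ∉ J) (hcard : n - d ≤ J.card) :
    {x : Fin n → Euc d | (∀ i, ‖x i‖ = 1) ∧ ∑ i, ℓ i • x i = 0 ∧
      ∀ j ∈ J, x j = x ⟨n - 1, by omega⟩} = ∅ := by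
  set m : Fin n := ⟨n - 1, by omega⟩
  set S := insert m J
  refine Set.eq_empty_of_forall_notMem fun x ⟨hnorm, hsum, hx⟩ => ?_
  have hle : ∑ j ∈ S, ℓ j ≤ ∑ j ∈ Sᶜ, ℓ j :=
    sum_le_sum_compl_of_sum_smul_eq_zero (fun i => (hpos i).le) (fun i => (hnorm i).le) hsum
      (hnorm m) fun j hj => (mem_insert.1 hj).elim (fun h => h ▸ rfl) (hx j)
  have hlong : Long ℓ Sᶜ :=
    ((hgen S).resolve_right (long_iff_sum_lt_two_mul.not.2 (by
      linarith [sum_add_sum_compl S ℓ]))).long_compl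
  have hcardSc : Sᶜ.card ≤ d - 1 := by
    rw [card_compl, Fintype.card_fin, card_insert_of_notMem hJ]
    omega
  have hmax : ∀ i, ℓ i ≤ ℓ m := fun i => hord (Fin.le_def.2 (Nat.le_sub_one_of_lt i.isLt))
  exact mem_compl.1 (hreg.mem_of_long_of_card_le hn (fun i => (hpos i).le) hmax hlong hcardSc)
    (mem_insert_self m J)
end
end
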